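/- Let G be a finite connected simple graph whose metric dimension equals 2, and let {ϖ, ξ} be a metric basis of G (a resolving set of cardinality 2). Then the degree of ϖ is at most 3 and the degree of ξ is at most 3. -/

import Mathlib

/-- Vertices of the heptagonal circular ladder: four families indexed by `ZMod n`. -/
inductive HCLVertex (n : ℕ) : Type
  | p (t : ZMod n) : HCLVertex n
  | q (t : ZMod n) : HCLVertex n
  | r (t : ZMod n) : HCLVertex n
  | s (t : ZMod n) : HCLVertex n
deriving DecidableEq

/-- Base relation giving the edges of the heptagonal circular ladder `Γ_n`:
`p_t p_{t+1}`, `p_t q_t`, `q_t r_t`, `r_t s_t`, `s_t r_{t+1}` (indices mod `n`). -/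
def gammaRel (n : ℕ) : HCLVertex n → HCLVertex n → Prop
  | .p t, .p u => u = t + 1
  | .p t, .q u => u = t
  | .q t, .r u => u = t
  | .r t, .s u => u = t
  | .s t, .r u => u = t + 1
  | _, _ => False

/-- The heptagonal circular ladder `Γ_n`. -/
def Gamma (n : ℕ) : SimpleGraph (HCLVertex n) :=
  SimpleGraph.fromRel (gammaRel n)

/-- The extra edges `r_t q_{t+1}` added to `Γ_n` to obtain `Δ_n`. -/
def deltaRel (n : ℕ) : HCLVertex n → HCLVertex n → Prop
  | .r t, .q u => u = t + 1
  | _, _ => False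

/-- The convex polytope graph `Δ_n`, obtained from `Γ_n` by adding the edges `r_t q_{t+1}`. -/
def Delta (n : ℕ) : SimpleGraph (HCLVertex n) :=
  SimpleGraph.fromRel (fun v w => gammaRel n v w ∨ deltaRel n v w)

/-- `W` is a resolving set of `G`: every pair of distinct vertices is distinguished by
its distance to some vertex of `W`. -/
def IsResolving {V : Type*} (G : SimpleGraph V) (W : Set V) : Prop :=
  ∀ u v : V, u ≠ v → ∃ w ∈ W, G.dist w u ≠ G.dist w v

/-- Distance from a vertex `x` to an edge `e = yz`: `min (d x y) (d x z)`. -/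
noncomputable def edgeDist {V : Type*} (G : SimpleGraph V) (x : V) (e : Sym2 V) : ℕ :=
  Sym2.lift ⟨fun y z => min (G.dist x y) (G.dist x z), fun y z => min_comm _ _⟩ e

/-- `W` is an edge resolving set of `G`: every pair of distinct edges is distinguished by
its distance to some vertex of `W`. -/
def IsEdgeResolving {V : Type*} (G : SimpleGraph V) (W : Set V) : Prop :=
  ∀ e ∈ G.edgeSet, ∀ f ∈ G.edgeSet, e ≠ f → ∃ w ∈ W, edgeDist G w e ≠ edgeDist G w f

/-- The metric dimension of `G`: minimum cardinality of a resolving set. -/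
noncomputable def metricDim {V : Type*} (G : SimpleGraph V) : ℕ :=
  sInf {k | ∃ W : Finset V, W.card = k ∧ IsResolving G ↑W}

/-- The edge metric dimension of `G`: minimum cardinality of an edge resolving set. -/
noncomputable def edgeMetricDim {V : Type*} (G : SimpleGraph V) : ℕ :=
  sInf {k | ∃ W : Finset V, W.card = k ∧ IsEdgeResolving G ↑W}

/-!
Neighbours of `ϖ` are all at distance one from `ϖ`, so `ξ` alone must separate them: the map
`dist ξ` is injective on the neighbourhood of `ϖ`. Since it moves by at most one along an edge,
it sends that neighbourhood into the three values `d(ξ, ϖ) - 1, d(ξ, ϖ), d(ξ, ϖ) + 1`.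
-/

namespace SimpleGraph

variable {V : Type*} {G : SimpleGraph V}

theorem Adj.dist_mem_Icc {v w : V} (hadj : G.Adj v w) (u : V) :
    G.dist u w ∈ Finset.Icc (G.dist u v - 1) (G.dist u v + 1) := by
  rw [Finset.mem_Icc]
  rcases hadj.diff_dist_adj (u := u) with h | h | h <;> omega

theorem injOn_dist_neighborSet_of_isResolving_pair {a b : V} (hres : IsResolving G {a, b}) :
    Set.InjOn (G.dist b) (G.neighborSet a) := by
  intro u hu v hv huv
  by_contra hne
  obtain ⟨w, hw, hwd⟩ := hres u v hne
  rcases hw with rfl | rfl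
  · exact hwd (by rw [dist_eq_one_iff_adj.mpr hu, dist_eq_one_iff_adj.mpr hv])
  · exact hwd huv

theorem degree_le_three_of_isResolving_pair [Fintype V] [DecidableRel G.Adj] {a b : V}
    (hres : IsResolving G {a, b}) : G.degree a ≤ 3 := by
  have hmaps : ∀ u ∈ G.neighborFinset a,
      G.dist b u ∈ Finset.Icc (G.dist b a - 1) (G.dist b a + 1) := fun u hu =>
    ((mem_neighborFinset G a u).mp hu).dist_mem_Icc b
  have hinj : Set.InjOn (G.dist b) (G.neighborFinset a) := by
    simpa only [coe_neighborFinset] using injOn_dist_neighborSet_of_isResolving_pair hres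
  calc G.degree a = (G.neighborFinset a).card := (card_neighborFinset_eq_degree G a).symm
    _ ≤ (Finset.Icc (G.dist b a - 1) (G.dist b a + 1)).card :=
      Finset.card_le_card_of_injOn _ hmaps hinj
    _ ≤ 3 := by rw [Nat.card_Icc]; omega

end SimpleGraph

theorem metric_basis_degree_le_three_general {V : Type*} [Fintype V]
    (G : SimpleGraph V) [DecidableRel G.Adj]
    (ϖ ξ : V)
    (hres : IsResolving G {ϖ, ξ}) :
    G.degree ϖ ≤ 3 ∧ G.degree ξ ≤ 3 :=
  ⟨SimpleGraph.degree_le_three_of_isResolving_pair hres,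
    SimpleGraph.degree_le_three_of_isResolving_pair (Set.pair_comm ϖ ξ ▸ hres)⟩

theorem metric_basis_degree_le_three {V : Type*} [Fintype V] [DecidableEq V]
    (G : SimpleGraph V) [DecidableRel G.Adj] (hconn : G.Connected)
    (hdim : metricDim G = 2) (ϖ ξ : V) (hne : ϖ ≠ ξ)
    (hres : IsResolving G {ϖ, ξ}) :
    G.degree ϖ ≤ 3 ∧ G.degree ξ ≤ 3 :=
  metric_basis_degree_le_three_general G ϖ ξ hres
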